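/- Let A be a commutative noetherian ring and f: M → N a homomorphism of finitely generated A-modules. Then the maps G_f(P): G_M(P) → G_N(P) are injective for every finitely generated A-module P if and only if the dual map f*: N* → M* is surjective. -/
import Mathlib


open Module LinearMap

/-- A linear map `φ : M → F` is *versal* if every linear map from `M` into a finitely
generated free module factors through `φ`. -/
def IsVersal (A : Type) [CommRing A] {M F : Type} [AddCommGroup M] [Module A M]
    [AddCommGroup F] [Module A F] (φ : M →ₗ[A] F) : Prop :=
  ∀ (E : Type) [AddCommGroup E] [Module A E] [Module.Free A E] [Module.Finite A E]
    (g : M →ₗ[A] E), ∃ h : F →ₗ[A] E, g = h ∘ₗ φ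

open Module LinearMap TensorProduct

/-- The natural map `α_{M,P} : M ⊗ P → Hom(M*, P)`, `α(m ⊗ p)(λ) = λ(m) • p`. -/
noncomputable def alphaMap (A : Type) [CommRing A] (M P : Type) [AddCommGroup M]
    [Module A M] [AddCommGroup P] [Module A P] :
    M ⊗[A] P →ₗ[A] (Module.Dual A M →ₗ[A] P) :=
  (dualTensorHom A (Module.Dual A M) P) ∘ₗ
    (TensorProduct.map (Module.Dual.eval A M) LinearMap.id)

/-- `G_M(P)` is the image of `α_{M,P} : M ⊗ P → Hom(M*, P)`. -/
noncomputable def GFun (A : Type) [CommRing A] (M P : Type) [AddCommGroup M] [Module A M]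
    [AddCommGroup P] [Module A P] : Submodule A (Module.Dual A M →ₗ[A] P) :=
  LinearMap.range (alphaMap A M P)

lemma alphaMap_tmul (A : Type) [CommRing A] (M P : Type) [AddCommGroup M]
    [Module A M] [AddCommGroup P] [Module A P] (m : M) (q : P) (l : Module.Dual A M) :
    alphaMap A M P (m ⊗ₜ q) l = l m • q := by
  simp [alphaMap]

/-- For `f : M → N`, the maps `G_f(P) : G_M(P) → G_N(P)` are injective for all finitely
generated `P` iff the dual map `f* : N* → M*` is surjective. -/
theorem stmt14 (A : Type) [CommRing A] [IsNoetherianRing A]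
    (M N : Type) [AddCommGroup M] [Module A M] [Module.Finite A M]
    [AddCommGroup N] [Module A N] [Module.Finite A N]
    (f : M →ₗ[A] N) :
    (∀ (P : Type) [AddCommGroup P] [Module A P] [Module.Finite A P],
        Set.InjOn (LinearMap.lcomp A P f.dualMap) (GFun A M P)) ↔
      Function.Surjective f.dualMap := by
  constructor
  · intro H
    obtain ⟨n, p, hp⟩ := Module.Finite.exists_fin' A M
    -- p : (Fin n → A) →ₗ[A] M surjective
    set F := Module.Dual A (Fin n → A)
    set S : Submodule A F := LinearMap.range (p.dualMap ∘ₗ f.dualMap) with hS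
    set P := F ⧸ S
    let π : F →ₗ[A] P := S.mkQ
    -- the key element
    set t : M ⊗[A] P := ∑ j : Fin n, p (Pi.single j 1) ⊗ₜ π (LinearMap.proj j) with ht
    have hkey : alphaMap A M P t = π ∘ₗ p.dualMap := by
      ext l
      rw [ht, map_sum]
      simp only [LinearMap.coe_sum, Finset.sum_apply, alphaMap_tmul, LinearMap.comp_apply]
      simp only [← map_smul π, ← map_sum]
      congr 1
      refine LinearMap.ext fun v => ?_
      have hv : (∑ j : Fin n, v j • (Pi.single j 1 : Fin n → A)) = v := by
        ext i
        simp [Pi.single_apply]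
      calc (∑ x : Fin n, l (p (Pi.single x 1)) • LinearMap.proj x) v
          = ∑ x : Fin n, l (p (Pi.single x 1)) * v x := by
            simp [LinearMap.sum_apply]
        _ = l (p (∑ j : Fin n, v j • (Pi.single j 1 : Fin n → A))) := by
            rw [map_sum, map_sum]
            congr 1; ext j
            rw [map_smul, map_smul, smul_eq_mul, mul_comm]
        _ = l (p v) := by rw [hv]
        _ = (p.dualMap l) v := rfl
    have hinj := H P
    have h0 : lcomp A P f.dualMap (alphaMap A M P t) = lcomp A P f.dualMap 0 := by
      rw [map_zero, hkey]
      ext ν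
      simp only [lcomp_apply, LinearMap.comp_apply, LinearMap.zero_apply]
      exact (Submodule.Quotient.mk_eq_zero S).2 ⟨ν, rfl⟩
    have ht0 : alphaMap A M P t = 0 :=
      hinj ⟨t, rfl⟩ ⟨0, map_zero _⟩ h0
    have hπp : π ∘ₗ p.dualMap = 0 := hkey ▸ ht0
    -- p.dualMap is injective
    have hpdinj : Function.Injective p.dualMap := by
      intro μ μ' h
      ext m
      obtain ⟨v, rfl⟩ := hp m
      exact congrFun (congrArg DFunLike.coe h) v
    intro μ
    have : p.dualMap μ ∈ S := by
      have h2 := congrFun (congrArg DFunLike.coe hπp) μ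
      simp only [LinearMap.comp_apply, LinearMap.zero_apply, Submodule.mkQ_apply, π] at h2
      exact (Submodule.Quotient.mk_eq_zero S).1 h2
    obtain ⟨ν, hν⟩ := this
    exact ⟨ν, hpdinj hν⟩
  · intro hs P _ _ _ x _ y _ h
    ext l
    obtain ⟨ν, rfl⟩ := hs l
    exact congrFun (congrArg DFunLike.coe h) ν
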